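/- arXiv:1807.11596 — 4 statements merged into one kernel-verified Lean document; each statement's English description precedes it below -/
import Mathlib

section
/- Let K be a number field, U ⊆ 𝒪_K^× a subgroup, and let J(U) be the ideal of 𝒪_K generated by {u - 1 : u ∈ U}. In the semidirect product π := 𝒪_K ⋊ U (with U acting on the additive group of 𝒪_K by multiplication), the commutator subgroup [π, π] equals the set of pairs (a, 1) with a ∈ J(U). -/
/-! For any commutative ring `R` and `U ≤ Rˣ`, the commutator of `(a, u)` and `(b, v)` in
`R ⋊ U` is `((u - 1) b - (v - 1) a, 1)`, so `[π, π] ⊆ J(U) × {1}`. Conversely `((u - 1) r, 1)`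
is the commutator of `(0, u)` and `(r, 1)`, and the products `r (u - 1)` generate `J(U)` as an
additive monoid. -/

open NumberField SemidirectProduct

/-- The action of a subgroup `U ⊆ 𝒪_K^×` on the additive group of `𝒪_K` by multiplication,
written multiplicatively so as to form the semidirect product `𝒪_K ⋊ U`. -/
def otAction (K : Type*) [Field K] [NumberField K] (U : Subgroup (𝓞 K)ˣ) :
    U →* MulAut (Multiplicative (𝓞 K)) where
  toFun u := AddEquiv.toMultiplicative (AddAut.mulLeft (u : (𝓞 K)ˣ))
  map_one' := by ext x; simp [AddEquiv.toMultiplicative]; rfl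
  map_mul' a b := by ext x; simp [AddEquiv.toMultiplicative, mul_assoc]; rfl

open scoped commutatorElement

lemma SemidirectProduct.mem_map_inl_iff {N G : Type*} [Group N] [Group G] {φ : G →* MulAut N}
    (S : Subgroup N) (p : N ⋊[φ] G) : p ∈ S.map inl ↔ p.right = 1 ∧ p.left ∈ S := by
  constructor
  · rintro ⟨n, hn, rfl⟩
    exact ⟨rfl, hn⟩
  · rintro ⟨hright, hleft⟩
    exact ⟨p.left, hleft, by ext <;> simp [hright]⟩

section Semiring

variable {R : Type*} [Semiring R]

def unitsMulAut (U : Subgroup Rˣ) : U →* MulAut (Multiplicative R) where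
  toFun u := AddEquiv.toMultiplicative (AddAut.mulLeft (u : Rˣ))
  map_one' := by ext x; exact one_mul x.toAdd
  map_mul' u v := by ext x; exact mul_assoc ((u : Rˣ) : R) ((v : Rˣ) : R) x.toAdd

variable {U : Subgroup Rˣ}

@[simp]
lemma unitsMulAut_apply (u : U) (x : Multiplicative R) :
    unitsMulAut U u x = Multiplicative.ofAdd (((u : Rˣ) : R) * x.toAdd) :=
  rfl

@[simp]
lemma unitsMulAut_symm_apply (u : U) (x : Multiplicative R) :
    (unitsMulAut U u).symm x = Multiplicative.ofAdd ((((u⁻¹ : U) : Rˣ) : R) * x.toAdd) := by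
  rw [MulEquiv.symm_apply_eq]
  simp [← mul_assoc]

end Semiring

section CommRing

variable {R : Type*} [CommRing R] {U : Subgroup Rˣ}

variable (U) in
def subOneIdeal : Ideal R := Ideal.span {x : R | ∃ u : U, x = ((u : Rˣ) : R) - 1}

local notation "π" => Multiplicative R ⋊[unitsMulAut U] U

lemma commutatorElement_eq_inl (g h : π) :
    ⁅g, h⁆ = inl (Multiplicative.ofAdd ((((g.right : Rˣ) : R) - 1) * h.left.toAdd -
      (((h.right : Rˣ) : R) - 1) * g.left.toAdd)) := by
  ext
  · simp only [commutatorElement_def, mul_left, unitsMulAut_apply, mul_right, map_mul, inv_left,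
      map_inv, MulAut.inv_apply, unitsMulAut_symm_apply, InvMemClass.coe_inv, toAdd_inv, mul_neg,
      ofAdd_neg, MulAut.mul_apply, toAdd_ofAdd, inv_right, mul_inv_cancel_comm,
      Units.mul_inv_cancel_left, ofAdd_toAdd, toAdd_mul, left_inl]
    rw [mul_left_comm, Units.mul_inv_cancel_left]
    ring
  · simp [commutatorElement_def, mul_comm g.right, -ofAdd_sub]

lemma inl_sub_one_mul_mem_commutator (u : U) (r : R) :
    (inl (Multiplicative.ofAdd ((((u : Rˣ) : R) - 1) * r)) : π) ∈ commutator π := by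
  have h : ⁅(inr u : π), (inl (Multiplicative.ofAdd r) : π)⁆ =
      inl (Multiplicative.ofAdd ((((u : Rˣ) : R) - 1) * r)) := by
    simp [commutatorElement_eq_inl]
  rw [← h, commutator_def]
  exact Subgroup.commutator_mem_commutator (Subgroup.mem_top _) (Subgroup.mem_top _)

theorem commutator_eq_map_inl :
    commutator π = (subOneIdeal U).toAddSubgroup.toSubgroup.map inl := by
  have sub_one_mem (u : U) : ((u : Rˣ) : R) - 1 ∈ subOneIdeal U := Ideal.subset_span ⟨u, rfl⟩
  apply le_antisymm
  · rw [commutator_def, Subgroup.commutator_le]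
    rintro g - h -
    rw [commutatorElement_eq_inl]
    refine Subgroup.mem_map_of_mem _ ((Multiplicative.mem_toSubgroup _ _).mpr (sub_mem ?_ ?_)) <;>
      exact Ideal.mul_mem_right _ _ (sub_one_mem _)
  · rw [Subgroup.map_le_iff_le_comap]
    intro x hx
    obtain ⟨a, rfl⟩ : ∃ a : R, Multiplicative.ofAdd a = x := ⟨x.toAdd, rfl⟩
    replace hx : a ∈ (subOneIdeal U).toAddSubmonoid := hx
    rw [subOneIdeal, Submodule.span_eq_closure] at hx
    induction hx using AddSubmonoid.closure_induction with
    | mem a ha =>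
      obtain ⟨r, -, _, ⟨u, rfl⟩, rfl⟩ := ha
      simpa [mul_comm r] using inl_sub_one_mul_mem_commutator u r
    | zero => exact (commutator π).one_mem
    | add a b _ _ ha hb => simpa using mul_mem ha hb

end CommRing

/-- The commutator subgroup of `π = 𝒪_K ⋊ U` is precisely the set of pairs `(a, 1)`
with `a` in the ideal `J(U)` generated by `u - 1` for `u ∈ U`. -/
theorem commutator_of_OT_pi (K : Type*) [Field K] [NumberField K] (U : Subgroup (𝓞 K)ˣ) :
    let J : Ideal (𝓞 K) := Ideal.span {x : 𝓞 K | ∃ u : U, x = ((u : (𝓞 K)ˣ) : 𝓞 K) - 1}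
    (commutator (Multiplicative (𝓞 K) ⋊[otAction K U] U) : Set _) =
      {p : Multiplicative (𝓞 K) ⋊[otAction K U] U |
        p.right = 1 ∧ Multiplicative.toAdd p.left ∈ J} := by
  intro J
  ext p
  -- `otAction K U` unfolds to `unitsMulAut U`, so the general result applies verbatim.
  exact (SetLike.ext_iff.mp (commutator_eq_map_inl (U := U)) p).trans (mem_map_inl_iff _ p)
end

section
/- Let K be a number field and U ⊆ 𝒪_K^× a subgroup containing at least one element u ≠ 1. Suppose β : U → 𝒪_K and δ = id satisfy β(b₁b₂) = β(b₁) + b₁·β(b₂) for all b₁, b₂ ∈ U. Then there exists c₀ ∈ K with (u−1)·c₀ ∈ 𝒪_K for all u ∈ U, such that β(b) = c₀·(b−1) for all b ∈ U. -/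
open NumberField

/-!
Since `U` is commutative, expanding `β (b * u) = β (u * b)` by the cocycle rule gives
`β b * (u - 1) = β u * (b - 1)`. Dividing by `u₀ - 1` for a fixed `u₀ ≠ 1` shows
`β b = c₀ * (b - 1)` with `c₀ = β u₀ / (u₀ - 1)`, and then `(u - 1) * c₀ = β u` is integral.
-/

section CrossedHom

variable {G R : Type*} [CommMagma G]

theorem crossedHom_mul_sub_one_comm [CommRing R] {φ : G → R} {β : G → R}
    (hβ : ∀ a b, β (a * b) = β a + φ a * β b) (a b : G) :
    β a * (φ b - 1) = β b * (φ a - 1) := by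
  have h := (hβ a b).symm.trans (mul_comm a b ▸ hβ b a)
  linear_combination -h

theorem crossedHom_eq_div_mul_sub_one [Field R] {φ : G → R} {β : G → R}
    (hβ : ∀ a b, β (a * b) = β a + φ a * β b) {u₀ : G} (hu₀ : φ u₀ ≠ 1) (b : G) :
    β b = β u₀ / (φ u₀ - 1) * (φ b - 1) := by
  have hne : φ u₀ - 1 ≠ 0 := sub_ne_zero.mpr hu₀
  field_simp
  exact crossedHom_mul_sub_one_comm hβ b u₀

end CrossedHom

theorem crossed_hom_eq_principal_general (K : Type*) [Field K]
    (U : Subgroup (𝓞 K)ˣ) (hU : ∃ u : U, u ≠ 1)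
    (β : U → 𝓞 K)
    (hβ : ∀ b₁ b₂ : U, β (b₁ * b₂) = β b₁ + ((b₁ : (𝓞 K)ˣ) : 𝓞 K) * β b₂) :
    ∃ c₀ : K,
      (∀ u : U, (algebraMap (𝓞 K) K ((u : (𝓞 K)ˣ) : 𝓞 K) - 1) * c₀ ∈
        Set.range (algebraMap (𝓞 K) K)) ∧
      ∀ b : U, algebraMap (𝓞 K) K (β b) =
        c₀ * (algebraMap (𝓞 K) K ((b : (𝓞 K)ˣ) : 𝓞 K) - 1) := by
  obtain ⟨u₀, hu₀⟩ := hU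
  let φ : U → K := fun b ↦ algebraMap (𝓞 K) K ((b : (𝓞 K)ˣ) : 𝓞 K)
  let βK : U → K := fun b ↦ algebraMap (𝓞 K) K (β b)
  have hβK : ∀ a b, βK (a * b) = βK a + φ a * βK b := by
    simp [βK, φ, hβ]
  have hφu₀ : φ u₀ ≠ 1 := by
    simpa [φ, map_eq_one_iff _ (FaithfulSMul.algebraMap_injective (𝓞 K) K)] using hu₀
  have hrepr := crossedHom_eq_div_mul_sub_one hβK hφu₀
  exact ⟨βK u₀ / (φ u₀ - 1), fun u ↦ ⟨β u, (hrepr u).trans (mul_comm _ _)⟩, hrepr⟩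

/-- A crossed homomorphism `β : U → 𝒪_K` for the trivial twisting (`δ = id`), on a subgroup
`U ⊆ 𝒪_K^×` containing some `u ≠ 1`, is of the form `β(b) = c₀·(b − 1)` for some `c₀ ∈ K`
lying in the fractional ideal `(𝒪_K : J(U))`, i.e. with `(u−1)·c₀ ∈ 𝒪_K` for all `u ∈ U`. -/
theorem crossed_hom_eq_principal (K : Type*) [Field K] [NumberField K]
    (U : Subgroup (𝓞 K)ˣ) (hU : ∃ u : U, u ≠ 1)
    (β : U → 𝓞 K)
    (hβ : ∀ b₁ b₂ : U, β (b₁ * b₂) = β b₁ + ((b₁ : (𝓞 K)ˣ) : 𝓞 K) * β b₂) :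
    ∃ c₀ : K,
      (∀ u : U, (algebraMap (𝓞 K) K ((u : (𝓞 K)ˣ) : 𝓞 K) - 1) * c₀ ∈
        Set.range (algebraMap (𝓞 K) K)) ∧
      ∀ b : U, algebraMap (𝓞 K) K (β b) =
        c₀ * (algebraMap (𝓞 K) K ((b : (𝓞 K)ˣ) : 𝓞 K) - 1) :=
  crossed_hom_eq_principal_general K U hU β hβ
end

section
/- Let K be a number field, U ⊆ 𝒪_K^× a subgroup such that no proper subfield of K contains U. Let α be an automorphism of the additive group (𝒪_K, +) and δ ∈ Aut(U) such that α(ab) = α(a)·δ(b) for all a ∈ 𝒪_K, b ∈ U. Then δ extends to a field automorphism φ : K → K with φ(U) = U, i.e., δ is the restriction to U of an element of Aut(K/ℚ) preserving U. -/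
/-!
The additive automorphism `α` of `𝓞 K` extends to an additive automorphism `ψ` of `K`, and
`e = ψ(1)⁻¹ ψ` satisfies `e 1 = 1` and `e (x u) = e x δ(u)` for `x ∈ K`, `u ∈ U`. The elements `x`
with `e (x y) = e x e y` for all `y` form a subfield containing `U`, which is therefore all of `K`;
so `e` is a field automorphism extending `δ`.
-/

open NumberField

section MultiplicativeSubfield

variable {K L : Type*} [Field K] [Field L]

def AddEquiv.multiplicativeSubfield (e : K ≃+ L) (h1 : e 1 = 1) : Subfield K where
  carrier := {x | ∀ y, e (x * y) = e x * e y}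
  one_mem' y := by simp [h1]
  mul_mem' {x x'} hx hx' y := by
    rw [mul_assoc, hx, hx', hx x', mul_assoc]
  zero_mem' y := by simp
  add_mem' {x x'} hx hx' y := by
    rw [add_mul, map_add, hx, hx', map_add, add_mul]
  neg_mem' {x} hx y := by
    rw [neg_mul, map_neg, hx, map_neg, neg_mul]
  inv_mem' x hx := by
    rcases eq_or_ne x 0 with rfl | hx0
    · intro y; simp
    have hex0 : e x ≠ 0 := e.map_ne_zero_iff.mpr hx0
    have hinv : ∀ y, e (x⁻¹ * y) = (e x)⁻¹ * e y := fun y => by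
      rw [eq_inv_mul_iff_mul_eq₀ hex0, ← hx, mul_inv_cancel_left₀ hx0]
    intro y
    rw [hinv, ← mul_one x⁻¹, hinv, h1, mul_one]

theorem AddEquiv.map_mul_of_closure_eq_top (e : K ≃+ L) (h1 : e 1 = 1) {S : Set K}
    (hS : Subfield.closure S = ⊤) (hmul : ∀ x, ∀ s ∈ S, e (x * s) = e x * e s) (x y : K) :
    e (x * y) = e x * e y := by
  have hle : Subfield.closure S ≤ e.multiplicativeSubfield h1 :=
    Subfield.closure_le.mpr fun s hs y => by rw [mul_comm, hmul y s hs, mul_comm]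
  exact (hS ▸ hle) (Subfield.mem_top x) y

end MultiplicativeSubfield

namespace NumberField

variable {K : Type*} [Field K] [NumberField K] {V : Type*} [AddCommGroup V] [Module ℚ V]

theorem addMonoidHom_ext_ringOfIntegers {f g : K →+ V}
    (h : ∀ a : 𝓞 K, f a = g a) : f = g := by
  suffices f.toRatLinearMap = g.toRatLinearMap from AddMonoidHom.ext (LinearMap.congr_fun this)
  exact (integralBasis K).ext fun i => by simpa using h _

theorem exists_addMonoidHom_extension_ringOfIntegers (α : 𝓞 K →+ V) :
    ∃ ψ : K →+ V, ∀ a : 𝓞 K, ψ a = α a := by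
  set b := RingOfIntegers.basis K
  let ψ : K →ₗ[ℚ] V := (integralBasis K).constr ℚ fun i => α (b i)
  have hψ : (ψ.restrictScalars ℤ).comp (algebraMap (𝓞 K) K).toAddMonoidHom.toIntLinearMap =
      α.toIntLinearMap :=
    b.ext fun i => by
      change ψ (algebraMap (𝓞 K) K (b i)) = α (b i)
      rw [← integralBasis_apply, Module.Basis.constr_basis]
  exact ⟨ψ.toAddMonoidHom, LinearMap.congr_fun hψ⟩

theorem exists_addEquiv_extension_ringOfIntegers {L : Type*} [Field L] [NumberField L]
    (α : 𝓞 K ≃+ 𝓞 L) : ∃ ψ : K ≃+ L, ∀ a : 𝓞 K, ψ a = α a := by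
  obtain ⟨ψ, hψ⟩ := exists_addMonoidHom_extension_ringOfIntegers
    ((algebraMap (𝓞 L) L).toAddMonoidHom.comp α.toAddMonoidHom)
  obtain ⟨ψ', hψ'⟩ := exists_addMonoidHom_extension_ringOfIntegers
    ((algebraMap (𝓞 K) K).toAddMonoidHom.comp α.symm.toAddMonoidHom)
  refine ⟨ψ.toAddEquiv ψ' ?_ ?_, hψ⟩
  · exact addMonoidHom_ext_ringOfIntegers fun a => by simp [hψ, hψ']
  · exact addMonoidHom_ext_ringOfIntegers fun a => by simp [hψ, hψ']

end NumberField

/-- Suppose no proper subfield of `K` contains the subgroup `U ⊆ 𝒪_K^×` (simple type).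
If `α` is an automorphism of the additive group `(𝒪_K, +)` and `δ ∈ Aut(U)` satisfy
`α(a·b) = α(a)·δ(b)` for all `a ∈ 𝒪_K`, `b ∈ U`, then `δ` is the restriction to `U` of a
field automorphism `φ : K → K` (which consequently preserves `U`). -/
theorem delta_extends_to_field_aut (K : Type*) [Field K] [NumberField K]
    (U : Subgroup (𝓞 K)ˣ)
    (hsimple : ∀ L : Subfield K,
      (∀ u : U, algebraMap (𝓞 K) K ((u : (𝓞 K)ˣ) : 𝓞 K) ∈ L) → L = ⊤)
    (α : (𝓞 K) ≃+ (𝓞 K)) (δ : U ≃* U)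
    (h : ∀ (a : 𝓞 K) (b : U), α (a * ((b : (𝓞 K)ˣ) : 𝓞 K)) =
      α a * (((δ b : U) : (𝓞 K)ˣ) : 𝓞 K)) :
    ∃ φ : K ≃+* K, ∀ u : U,
      φ (algebraMap (𝓞 K) K ((u : (𝓞 K)ˣ) : 𝓞 K)) =
        algebraMap (𝓞 K) K (((δ u : U) : (𝓞 K)ˣ) : 𝓞 K) := by
  obtain ⟨ψ, hψ⟩ := exists_addEquiv_extension_ringOfIntegers α
  have hc : ψ 1 ≠ 0 := ψ.map_ne_zero_iff.mpr one_ne_zero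
  let e : K ≃+ K := ψ.trans (LinearEquiv.smulOfNeZero K K (ψ 1)⁻¹ (inv_ne_zero hc)).toAddEquiv
  have he : ∀ x, e x = (ψ 1)⁻¹ * ψ x := fun _ => rfl
  have h1 : e 1 = 1 := inv_mul_cancel₀ hc
  have htwist : ∀ (x : K) (u : U), e (x * ((u : (𝓞 K)ˣ) : 𝓞 K)) =
      e x * (((δ u : U) : (𝓞 K)ˣ) : 𝓞 K) := fun x u => by
    -- both sides are additive in `x`, so it suffices to take `x ∈ 𝓞 K`, where this is `h`
    let lhs : K →+ K := e.toAddMonoidHom.comp (AddMonoidHom.mulRight ((u : (𝓞 K)ˣ) : K))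
    let rhs : K →+ K := (AddMonoidHom.mulRight ((δ u : (𝓞 K)ˣ) : K)).comp e.toAddMonoidHom
    refine DFunLike.congr_fun (addMonoidHom_ext_ringOfIntegers (f := lhs) (g := rhs) fun a => ?_) x
    simp [lhs, rhs, he, ← map_mul, hψ, h, mul_assoc]
  have hδ : ∀ u : U, e ((u : (𝓞 K)ˣ) : 𝓞 K) = (((δ u : U) : (𝓞 K)ˣ) : 𝓞 K) := fun u => by
    simpa [h1] using htwist 1 u
  have hclosure : Subfield.closure (Set.range fun u : U => ((u : (𝓞 K)ˣ) : K)) = ⊤ :=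
    hsimple _ fun u => Subfield.subset_closure ⟨u, rfl⟩
  have hmul := e.map_mul_of_closure_eq_top h1 hclosure (by
    rintro x _ ⟨u, rfl⟩
    rw [htwist, hδ])
  exact ⟨{ e with map_mul' := hmul }, hδ⟩
end

section
/- Let K be a number field and 𝔪 a modulus with 𝔪(P) = 1 at all real places, such that the ideal 𝔪₀ admits generators g₁,…,g_r with each gᵢ + 1 a totally positive unit of 𝒪_K (an 'exceptional modulus'). Then J(U_{𝔪,1}) = 𝔪₀, where U_{𝔪,1} is the ray unit group of 𝔪 and J(U_{𝔪,1}) is the ideal generated by {u−1 : u ∈ U_{𝔪,1}}. -/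
/-!
A generator `g` of `𝔪₀` yields the ray unit `g + 1`, so `𝔪₀ ⊆ J(U_{𝔪,1})`. Conversely, for a ray
unit `u` the element `u - 1` lies in every `P ^ e P`, and these powers of distinct primes are
pairwise coprime, so their intersection is their product `𝔪₀`.
-/

open NumberField

theorem Ideal.mem_prod_pow_iff_of_isPrime {R : Type*} [CommRing R] [IsDedekindDomain R]
    {S : Finset (Ideal R)} (hS : ∀ P ∈ S, P.IsPrime ∧ P ≠ ⊥) (e : Ideal R → ℕ) {x : R} :
    x ∈ ∏ P ∈ S, P ^ e P ↔ ∀ P ∈ S, x ∈ P ^ e P := by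
  have hinf : (S.inf fun P => P ^ e P) = ∏ P ∈ S, P ^ e P :=
    IsDedekindDomain.inf_pow_eq_prod_of_prime S id e
      (fun P hP => Ideal.prime_of_isPrime (hS P hP).2 (hS P hP).1) (fun _ _ _ _ h => h)
  rw [← hinf, Submodule.mem_finsetInf]

theorem J_of_ray_units_eq_m0_of_exceptional_general (K : Type*) [Field K] [NumberField K]
    (S : Finset (Ideal (𝓞 K))) (hS : ∀ P ∈ S, P.IsPrime ∧ P ≠ ⊥)
    (e : Ideal (𝓞 K) → ℕ)
    (G : Set (𝓞 K)) (hGgen : Ideal.span G = ∏ P ∈ S, P ^ e P)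
    (hGunit : ∀ g ∈ G, ∃ v : (𝓞 K)ˣ, (v : 𝓞 K) = g + 1 ∧
      ∀ σ : K →+* ℝ, 0 < σ (algebraMap (𝓞 K) K (v : 𝓞 K))) :
    Ideal.span {x : 𝓞 K | ∃ u : (𝓞 K)ˣ,
        (∀ P ∈ S, ((u : 𝓞 K) - 1) ∈ P ^ e P) ∧
        (∀ σ : K →+* ℝ, 0 < σ (algebraMap (𝓞 K) K (u : 𝓞 K))) ∧
        x = (u : 𝓞 K) - 1} =
      ∏ P ∈ S, P ^ e P := by
  apply le_antisymm
  · rw [Ideal.span_le]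
    rintro _ ⟨u, hu, -, rfl⟩
    exact (Ideal.mem_prod_pow_iff_of_isPrime hS e).mpr hu
  · rw [← hGgen, Ideal.span_le]
    intro g hg
    obtain ⟨v, hv, hv_pos⟩ := hGunit g hg
    have hv_sub : (v : 𝓞 K) - 1 = g := by rw [hv, add_sub_cancel_right]
    have hg_mem : g ∈ ∏ P ∈ S, P ^ e P := hGgen ▸ Ideal.subset_span hg
    refine Ideal.subset_span ⟨v, fun P hP => ?_, hv_pos, hv_sub.symm⟩
    exact hv_sub ▸ (Ideal.mem_prod_pow_iff_of_isPrime hS e).mp hg_mem P hP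

/-- Let `𝔪` be an exceptional modulus: `𝔪(σ) = 1` at all real places, and the finite part
`𝔪₀ = ∏_{P ∈ S} P^{e P}` admits a set of generators `g` such that each `g + 1` is a totally
positive unit.  Then `J(U_{𝔪,1}) = 𝔪₀`, where `U_{𝔪,1}` is the ray unit group of `𝔪`. -/
theorem J_of_ray_units_eq_m0_of_exceptional (K : Type*) [Field K] [NumberField K]
    (S : Finset (Ideal (𝓞 K))) (hS : ∀ P ∈ S, P.IsPrime ∧ P ≠ ⊥)
    (e : Ideal (𝓞 K) → ℕ) (he : ∀ P ∈ S, 1 ≤ e P)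
    (G : Set (𝓞 K)) (hGgen : Ideal.span G = ∏ P ∈ S, P ^ e P)
    (hGunit : ∀ g ∈ G, ∃ v : (𝓞 K)ˣ, (v : 𝓞 K) = g + 1 ∧
      ∀ σ : K →+* ℝ, 0 < σ (algebraMap (𝓞 K) K (v : 𝓞 K))) :
    Ideal.span {x : 𝓞 K | ∃ u : (𝓞 K)ˣ,
        (∀ P ∈ S, ((u : 𝓞 K) - 1) ∈ P ^ e P) ∧
        (∀ σ : K →+* ℝ, 0 < σ (algebraMap (𝓞 K) K (u : 𝓞 K))) ∧
        x = (u : 𝓞 K) - 1} =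
      ∏ P ∈ S, P ^ e P :=
  J_of_ray_units_eq_m0_of_exceptional_general K S hS e G hGgen hGunit
end
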